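/- For the nondeterminism signature and observations, the function π_d defined by π_d o = atom (o, o) is an α-decomposition, and its dual λ o. dualTest (π_d o) (which equals π_d, since dualTest (atom (o, o)) = atom (o, o)) is a β-decomposition; consequently the triple (O, π_leaf, π_node) for nondeterminism is strongly decomposable. -/

import Mathlib

set_option autoImplicit false

universe u v w

/-! ### Tests -/

inductive Test (A : Type u) : Type u
  | atom (a : A)
  | tru
  | fls
  | and (t₁ t₂ : Test A)
  | or (t₁ t₂ : Test A)
  | all (ts : ℕ → Test A)
  | ex (ts : ℕ → Test A)

/-- Interpretation of tests as types. -/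
def liftTest {A : Type u} (P : A → Type w) : Test A → Type w
  | .atom a => P a
  | .tru => PUnit
  | .fls => PEmpty
  | .and t₁ t₂ => liftTest P t₁ × liftTest P t₂
  | .or t₁ t₂ => liftTest P t₁ ⊕ liftTest P t₂
  | .all ts => (n : ℕ) → liftTest P (ts n)
  | .ex ts => (n : ℕ) × liftTest P (ts n)

def mapTest {A : Type u} {B : Type v} (f : A → B) : Test A → Test B
  | .atom a => .atom (f a)
  | .tru => .tru
  | .fls => .fls
  | .and t₁ t₂ => .and (mapTest f t₁) (mapTest f t₂)
  | .or t₁ t₂ => .or (mapTest f t₁) (mapTest f t₂)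
  | .all ts => .all (fun n => mapTest f (ts n))
  | .ex ts => .ex (fun n => mapTest f (ts n))

/-- The dual of a test. -/
def dualTest {A : Type u} : Test A → Test A
  | .atom a => .atom a
  | .tru => .fls
  | .fls => .tru
  | .and t₁ t₂ => .or (dualTest t₁) (dualTest t₂)
  | .or t₁ t₂ => .and (dualTest t₁) (dualTest t₂)
  | .all ts => .ex (fun n => dualTest (ts n))
  | .ex ts => .all (fun n => dualTest (ts n))

/-! ### Coinductive trees, as an M-type -/

def CTreeP (K : Type) (I : K → Type) (A : Type v) : PFunctor.{v} :=
  ⟨A ⊕ ULift.{v} K, Sum.elim (fun _ => PEmpty.{v+1}) (fun k => ULift.{v} (I k.down))⟩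

/-- Coinductive trees with `A`-labelled leaves and `K`-labelled nodes of arity `I k`. -/
def CTree (K : Type) (I : K → Type) (A : Type v) : Type v := (CTreeP K I A).M

namespace CTree

variable {K : Type} {I : K → Type} {A : Type v}

def leaf (a : A) : CTree K I A :=
  PFunctor.M.mk ⟨Sum.inl a, fun e => e.elim⟩

def node (k : K) (ts : I k → CTree K I A) : CTree K I A :=
  PFunctor.M.mk ⟨Sum.inr ⟨k⟩, fun i => ts i.down⟩

/-- Monad multiplication on trees: `mu (leaf t) = t`, `mu (node k ts) = node k (mu ∘ ts)`. -/
def mu (d : CTree K I (CTree K I A)) : CTree K I A :=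
  PFunctor.M.corec
    (fun (s : CTree K I (CTree K I A) ⊕ CTree K I A) =>
      match s with
      | Sum.inl d' =>
          match PFunctor.M.dest d' with
          | ⟨Sum.inl t, _⟩ =>
              (match PFunctor.M.dest t with
              | ⟨Sum.inl a, _⟩ => ⟨Sum.inl a, fun e => e.elim⟩
              | ⟨Sum.inr k, ts⟩ => ⟨Sum.inr k, fun i => Sum.inr (ts i)⟩)
          | ⟨Sum.inr k, ds⟩ => ⟨Sum.inr k, fun i => Sum.inl (ds i)⟩
      | Sum.inr t =>
          match PFunctor.M.dest t with
          | ⟨Sum.inl a, _⟩ => ⟨Sum.inl a, fun e => e.elim⟩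
          | ⟨Sum.inr k, ts⟩ => ⟨Sum.inr k, fun i => Sum.inr (ts i)⟩)
    (Sum.inl d)

end CTree
/-! ### The inductive predicate lifting α -/

section PredLift

variable {K : Type} {I : K → Type} {O : Type}

mutual
  /-- The inductive algebra `α`, parametrized directly by the leaf predicate `P`:
      `Alpha πl πn P o t` corresponds to `α o (mapTree P t)` in the paper. -/
  inductive Alpha {K : Type} {I : K → Type} {O : Type}
      (πl : O → Bool) (πn : (k : K) → O → Test (I k × O))
      {A : Type v} (P : A → Type w) : O → CTree K I A → Type (max v w)
    | leaf {o : O} {a : A} (b : πl o = true) (p : P a) :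
        Alpha πl πn P o (CTree.leaf a)
    | node {o : O} {k : K} {Ps : I k → CTree K I A}
        (ps : AlphaT πl πn P (πn k o) Ps) :
        Alpha πl πn P o (CTree.node k Ps)

  /-- Inductive presentation of `liftTest (fun (x, o') => Alpha πl πn P o' (Ps x)) s`. -/
  inductive AlphaT {K : Type} {I : K → Type} {O : Type}
      (πl : O → Bool) (πn : (k : K) → O → Test (I k × O))
      {A : Type v} (P : A → Type w) :
      {k : K} → Test (I k × O) → (I k → CTree K I A) → Type (max v w)
    | atom {k : K} {x : I k} {o : O} {Ps : I k → CTree K I A}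
        (p : Alpha πl πn P o (Ps x)) : AlphaT πl πn P (.atom (x, o)) Ps
    | tru {k : K} {Ps : I k → CTree K I A} : AlphaT πl πn P .tru Ps
    | and {k : K} {t₁ t₂ : Test (I k × O)} {Ps : I k → CTree K I A}
        (p₁ : AlphaT πl πn P t₁ Ps) (p₂ : AlphaT πl πn P t₂ Ps) :
        AlphaT πl πn P (.and t₁ t₂) Ps
    | orl {k : K} {t₁ t₂ : Test (I k × O)} {Ps : I k → CTree K I A}
        (p : AlphaT πl πn P t₁ Ps) : AlphaT πl πn P (.or t₁ t₂) Ps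
    | orr {k : K} {t₁ t₂ : Test (I k × O)} {Ps : I k → CTree K I A}
        (p : AlphaT πl πn P t₂ Ps) : AlphaT πl πn P (.or t₁ t₂) Ps
    | all {k : K} {ts : ℕ → Test (I k × O)} {Ps : I k → CTree K I A}
        (ps : (n : ℕ) → AlphaT πl πn P (ts n) Ps) : AlphaT πl πn P (.all ts) Ps
    | ex {k : K} {ts : ℕ → Test (I k × O)} {Ps : I k → CTree K I A}
        (n : ℕ) (p : AlphaT πl πn P (ts n) Ps) : AlphaT πl πn P (.ex ts) Ps
end

/-- The inductive `O`-indexed predicate lifting. -/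
def liftTree (πl : O → Bool) (πn : (k : K) → O → Test (I k × O))
    (o : O) {A : Type v} (P : A → Type w) (t : CTree K I A) : Type (max v w) :=
  Alpha πl πn P o t

/-! ### The coinductive predicate lifting β, encoded as an M-type of raw proof
trees carrying a (coinductively defined) well-formedness invariant. -/

/-- Selections through a test: the container shapes of `liftTest`. -/
inductive Sel {X : Type} : Test X → Type
  | atom (x : X) : Sel (.atom x)
  | tru : Sel .tru
  | and {t₁ t₂ : Test X} (c₁ : Sel t₁) (c₂ : Sel t₂) : Sel (.and t₁ t₂)
  | orl {t₁ t₂ : Test X} (c : Sel t₁) : Sel (.or t₁ t₂)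
  | orr {t₁ t₂ : Test X} (c : Sel t₂) : Sel (.or t₁ t₂)
  | all {ts : ℕ → Test X} (cs : (n : ℕ) → Sel (ts n)) : Sel (.all ts)
  | ex {ts : ℕ → Test X} (n : ℕ) (c : Sel (ts n)) : Sel (.ex ts)

/-- The atoms reached by a selection, with their labels:
`liftTest Q s ≃ Σ c : Sel s, ∀ x, Sel.At c x → Q x`. -/
inductive Sel.At {X : Type} : {s : Test X} → Sel s → X → Type
  | atom (x : X) : Sel.At (.atom x) x
  | andl {t₁ t₂ : Test X} {c₁ : Sel t₁} {c₂ : Sel t₂} {x : X}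
      (h : Sel.At c₁ x) : Sel.At (.and c₁ c₂) x
  | andr {t₁ t₂ : Test X} {c₁ : Sel t₁} {c₂ : Sel t₂} {x : X}
      (h : Sel.At c₂ x) : Sel.At (.and c₁ c₂) x
  | orl {t₁ t₂ : Test X} {c : Sel t₁} {x : X}
      (h : Sel.At c x) : Sel.At (.orl (t₂ := t₂) c) x
  | orr {t₁ t₂ : Test X} {c : Sel t₂} {x : X}
      (h : Sel.At c x) : Sel.At (.orr (t₁ := t₁) c) x
  | all {ts : ℕ → Test X} {cs : (n : ℕ) → Sel (ts n)} (n : ℕ) {x : X}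
      (h : Sel.At (cs n) x) : Sel.At (.all cs) x
  | ex {ts : ℕ → Test X} {n : ℕ} {c : Sel (ts n)} {x : X}
      (h : Sel.At c x) : Sel.At (.ex n c) x

variable (πl : O → Bool) (πn : (k : K) → O → Test (I k × O))

/-- Shapes of raw proof trees for the coinductive lifting specified by `(πl, πn)`:
either leaf evidence (a proof of the leaf predicate, or evidence that the
observation is not correct for termination), or a selection through the test
at a node. -/
def BetaShape {A : Type v} (P : A → Type w) : Type (max v w) :=
  (Σ' (o : O) (a : A), PSum (P a) (πl o = false)) ⊕ (Σ' (k : K) (o : O), Sel (πn k o))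

end PredLift
section Beta

variable {K : Type} {I : K → Type} {O : Type}
variable (πl : O → Bool) (πn : (k : K) → O → Test (I k × O))

/-- The polynomial functor of raw proof trees for the coinductive lifting. -/
def BetaPF {A : Type v} (P : A → Type w) : PFunctor.{max v w} :=
  ⟨BetaShape πl πn P,
   Sum.elim (fun _ => PEmpty.{(max v w)+1})
     (fun s => ULift.{max v w} ((x : I s.1 × O) × Sel.At s.2.2 x))⟩

/-- Raw (coinductive) proof trees for the coinductive lifting. -/
def BetaPf {A : Type v} (P : A → Type w) : Type (max v w) := (BetaPF πl πn P).M

/-- One step of well-formedness of a raw proof tree with respect to an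
observation and a tree. -/
def BetaWFStep {A : Type v} (P : A → Type w)
    (R : BetaPf πl πn P → O → CTree K I A → Prop)
    (pf : BetaPf πl πn P) (o : O) (t : CTree K I A) : Prop :=
  match PFunctor.M.dest pf, PFunctor.M.dest t with
  | ⟨Sum.inl ⟨o', a', _⟩, _⟩, ⟨Sum.inl a, _⟩ => o' = o ∧ a' = a
  | ⟨Sum.inr ⟨k', o', c⟩, ch⟩, ⟨Sum.inr k, ts⟩ =>
      o' = o ∧ ∃ h : k' = k.down,
        ∀ (x : I k' × O) (hx : Sel.At c x),
          R (ch ⟨⟨x, hx⟩⟩) x.2 (ts ⟨h ▸ x.1⟩)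
  | _, _ => False

/-- Well-formedness (the coinductive component of `β`), as a greatest fixed
point: an invariant closed under one-step unfolding. -/
def BetaWF {A : Type v} (P : A → Type w)
    (pf : BetaPf πl πn P) (o : O) (t : CTree K I A) : Prop :=
  ∃ R : BetaPf πl πn P → O → CTree K I A → Prop,
    (∀ pf o t, R pf o t → BetaWFStep πl πn P R pf o t) ∧ R pf o t

/-- The coinductive algebra `β` specified by `(πl, πn)`, parametrized directly
by the leaf predicate `P`: `Beta πl πn P o t` corresponds to
`β o (mapTree P t)` in the paper. -/
def Beta {A : Type v} (P : A → Type w) (o : O) (t : CTree K I A) : Type (max v w) :=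
  Σ' pf : BetaPf πl πn P, BetaWF πl πn P pf o t

/-- The coinductive `O`-indexed predicate lifting, forming a complementing
pair with `liftTree`: it is specified by `πl` and the dual of `πn`. -/
def coliftTree (o : O) {A : Type v} (P : A → Type w) (t : CTree K I A) : Type (max v w) :=
  Beta πl (fun k o' => dualTest (πn k o')) P o t

end Beta
section Gamma

variable {K : Type} {I : K → Type} {O : Type}

/-- `R`-correctness of a predicate. -/
def RCorrect {A : Type v} (R : A → A → Type u) (f : A → Type) : Type (max v u) :=
  ∀ a b, f a → R a b → f b

variable (πl : O → Bool) (πn : (k : K) → O → Test (I k × O))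

/-- The relation lifting `Γ`. -/
def Gamma {A : Type v} (R : A → A → Type u) (t₀ t₁ : CTree K I A) : Type (max v u 1) :=
  ∀ (f : A → Type), RCorrect R f → ∀ o : O,
    (liftTree πl πn o f t₀ → liftTree πl πn o f t₁) ×
    (coliftTree πl πn o f t₀ → coliftTree πl πn o f t₁)

end Gamma

section Lang

variable (K : Type) (I : K → Type) (O : Type)

inductive Ty : Type
  | nat
  | arrow (σ ρ : Ty)
  | prod (σ ρ : Ty)
  | u (σ : Ty)

def Val : Ty → Type
  | .nat => ℕ
  | .arrow σ ρ => Val σ → CTree K I (Val ρ)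
  | .prod σ ρ => Val σ × Val ρ
  | .u σ => CTree K I (Val σ)

def Cpt (σ : Ty) : Type := CTree K I (Val K I σ)

inductive Srt : Type
  | val
  | cpt

def Tm : Srt → Ty → Type
  | .val, σ => Val K I σ
  | .cpt, σ => Cpt K I σ

mutual
  /-- Behavioural formulae. -/
  inductive Form : Srt → Ty → Type
    | eq (n : ℕ) : Form .val .nat
    | neq (n : ℕ) : Form .val .nat
    | mapsto {σ ρ : Ty} (V : Val K I σ) (φ : Form .cpt ρ) : Form .val (.arrow σ ρ)
    | fst {σ ρ : Ty} (φ : Form .val σ) : Form .val (.prod σ ρ)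
    | snd {σ ρ : Ty} (φ : Form .val ρ) : Form .val (.prod σ ρ)
    | thunk {σ : Ty} (φ : Form .cpt σ) : Form .val (.u σ)
    | test {b : Srt} {σ : Ty} (φs : FTest b σ) : Form b σ
    | obsA {σ : Ty} (o : O) (φ : Form .val σ) : Form .cpt σ
    | obsB {σ : Ty} (o : O) (φ : Form .val σ) : Form .cpt σ

  /-- Tests of formulae: the grammar `Test` instantiated at `Form b σ`
  (inlined, as Lean does not accept the nested occurrence). -/
  inductive FTest : Srt → Ty → Type
    | atom {b : Srt} {σ : Ty} (φ : Form b σ) : FTest b σ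
    | tru {b : Srt} {σ : Ty} : FTest b σ
    | fls {b : Srt} {σ : Ty} : FTest b σ
    | and {b : Srt} {σ : Ty} (t₁ t₂ : FTest b σ) : FTest b σ
    | or {b : Srt} {σ : Ty} (t₁ t₂ : FTest b σ) : FTest b σ
    | all {b : Srt} {σ : Ty} (ts : ℕ → FTest b σ) : FTest b σ
    | ex {b : Srt} {σ : Ty} (ts : ℕ → FTest b σ) : FTest b σ
end

end Lang

section Neg

variable {K : Type} {I : K → Type} {O : Type}

/-- `FTest b σ` realizes `Test (Form b σ)`. -/
def toFTest {b : Srt} {σ : Ty} : Test (Form K I O b σ) → FTest K I O b σ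
  | .atom φ => .atom φ
  | .tru => .tru
  | .fls => .fls
  | .and t₁ t₂ => .and (toFTest t₁) (toFTest t₂)
  | .or t₁ t₂ => .or (toFTest t₁) (toFTest t₂)
  | .all ts => .all (fun n => toFTest (ts n))
  | .ex ts => .ex (fun n => toFTest (ts n))

/-- The formula `test φs` for a test of formulae `φs : Test (Form b σ)`. -/
def Form.mkTest {b : Srt} {σ : Ty} (φs : Test (Form K I O b σ)) : Form K I O b σ :=
  .test (toFTest φs)

mutual
  /-- Negation of formulae. -/
  def negFma : {b : Srt} → {σ : Ty} → Form K I O b σ → Form K I O b σ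
    | _, _, .eq n => .neq n
    | _, _, .neq n => .eq n
    | _, _, .mapsto V φ => .mapsto V (negFma φ)
    | _, _, .fst φ => .fst (negFma φ)
    | _, _, .snd φ => .snd (negFma φ)
    | _, _, .thunk φ => .thunk (negFma φ)
    | _, _, .test φs => .test (negFTest φs)
    | _, _, .obsA o φ => .obsB o (negFma φ)
    | _, _, .obsB o φ => .obsA o (negFma φ)

  /-- The action of `mapTest negFma` on tests of formulae. -/
  def negFTest : {b : Srt} → {σ : Ty} → FTest K I O b σ → FTest K I O b σ
    | _, _, .atom φ => .atom (negFma φ)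
    | _, _, .tru => .tru
    | _, _, .fls => .fls
    | _, _, .and t₁ t₂ => .and (negFTest t₁) (negFTest t₂)
    | _, _, .or t₁ t₂ => .or (negFTest t₁) (negFTest t₂)
    | _, _, .all ts => .all (fun n => negFTest (ts n))
    | _, _, .ex ts => .ex (fun n => negFTest (ts n))
end

end Neg
section Sat

variable {K : Type} {I : K → Type} {O : Type}
variable (πl : O → Bool) (πn : (k : K) → O → Test (I k × O))

mutual
  /-- Satisfaction of formulae by terms: `Sat πl πn φ P` is `P ⊨ φ`. -/
  def Sat : {b : Srt} → {σ : Ty} → Form K I O b σ → Tm K I b σ → Type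
    | _, _, .eq n, m => PLift (m = n)
    | _, _, .neq n, m => PLift (m ≠ n)
    | _, _, .mapsto V φ, W => Sat φ (W V)
    | _, _, .fst φ, p => Sat φ p.1
    | _, _, .snd φ, p => Sat φ p.2
    | _, _, .thunk φ, V => Sat (b := .cpt) φ V
    | _, _, .test φs, P => SatTest φs P
    | _, _, .obsA o φ, M => liftTree πl πn o (fun V => Sat φ V) M
    | _, _, .obsB o φ, M => coliftTree πl πn o (fun V => Sat φ V) M

  /-- Satisfaction of tests of formulae: realizes `liftTest (fun φ => Sat πl πn φ P) φs`. -/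
  def SatTest : {b : Srt} → {σ : Ty} → FTest K I O b σ → Tm K I b σ → Type
    | _, _, .atom φ, P => Sat φ P
    | _, _, .tru, _ => PUnit
    | _, _, .fls, _ => PEmpty
    | _, _, .and t₁ t₂, P => SatTest t₁ P × SatTest t₂ P
    | _, _, .or t₁ t₂, P => SatTest t₁ P ⊕ SatTest t₂ P
    | _, _, .all ts, P => (n : ℕ) → SatTest (ts n) P
    | _, _, .ex ts, P => (n : ℕ) × SatTest (ts n) P
end

end Sat
section Decomp

variable {K : Type} {I : K → Type} {O : Type}
variable (πl : O → Bool) (πn : (k : K) → O → Test (I k × O))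

/-- The algebra `α` on trees of types. -/
def algA (o : O) (t : CTree K I Type) : Type 1 :=
  Alpha πl πn (fun X => X) o t

/-- The algebra `β` on trees of types (as part of the complementing pair, it
is specified by `πl` and the dual of `πn`). -/
def algB (o : O) (t : CTree K I Type) : Type 1 :=
  coliftTree πl πn o (fun X => X) t

/-- The extensional order `⊑` on double trees. -/
def DTLe (d₀ d₁ : CTree K I (CTree K I Type)) : Type 1 :=
  ∀ o₀ o₁ : O,
    (liftTree πl πn o₀ (algA πl πn o₁) d₀ → liftTree πl πn o₀ (algA πl πn o₁) d₁) ×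
    (coliftTree πl πn o₀ (algB πl πn o₁) d₀ → coliftTree πl πn o₀ (algB πl πn o₁) d₁)

/-- The extensional order `⊑` on single trees. -/
def STLe (t₀ t₁ : CTree K I Type) : Type 1 :=
  ∀ o : O, (algA πl πn o t₀ → algA πl πn o t₁) × (algB πl πn o t₀ → algB πl πn o t₁)

/-- Strong decomposability of `(O, πl, πn)`. -/
def StronglyDecomposable : Type 1 :=
  ∀ d₀ d₁ : CTree K I (CTree K I Type),
    DTLe πl πn d₀ d₁ → STLe πl πn (CTree.mu d₀) (CTree.mu d₁)

/-- `πd` is an `α`-decomposition. -/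
def IsAlphaDecomposition (πd : O → Test (O × O)) : Type 1 :=
  ∀ (d : CTree K I (CTree K I Type)) (o : O),
    (algA πl πn o (CTree.mu d) →
      liftTest (fun p => liftTree πl πn p.1 (algA πl πn p.2) d) (πd o)) ×
    (liftTest (fun p => liftTree πl πn p.1 (algA πl πn p.2) d) (πd o) →
      algA πl πn o (CTree.mu d))

/-- `πd` is a `β`-decomposition. -/
def IsBetaDecomposition (πd : O → Test (O × O)) : Type 1 :=
  ∀ (d : CTree K I (CTree K I Type)) (o : O),
    (algB πl πn o (CTree.mu d) →
      liftTest (fun p => coliftTree πl πn p.1 (algB πl πn p.2) d) (πd o)) ×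
    (liftTest (fun p => coliftTree πl πn p.1 (algB πl πn p.2) d) (πd o) →
      algB πl πn o (CTree.mu d))

/-- The formula `(πd o)_α[φ]`. -/
def decompFormA (πd : O → Test (O × O)) (o : O) {τ : Ty} (φ : Form K I O .val τ) :
    Form K I O .cpt (.u τ) :=
  Form.mkTest (mapTest (fun p => .obsA p.1 (.thunk (.obsA p.2 φ))) (πd o))

/-- The formula `(πd o)_β[φ]`. -/
def decompFormB (πd : O → Test (O × O)) (o : O) {τ : Ty} (φ : Form K I O .val τ) :
    Form K I O .cpt (.u τ) :=
  Form.mkTest (mapTest (fun p => .obsB p.1 (.thunk (.obsB p.2 φ))) (πd o))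

end Decomp

section Sim

variable {K : Type} {I : K → Type} {O : Type}
variable (πl : O → Bool) (πn : (k : K) → O → Test (I k × O))

/-- Well-typed relations on terms. -/
def WtRel (K : Type) (I : K → Type) : Type 1 :=
  (b : Srt) → (τ : Ty) → Tm K I b τ → Tm K I b τ → Type

/-- Applicative `Γ`-simulations. -/
structure IsSimulation (R : WtRel K I) : Type 1 where
  natCond : ∀ n m : Tm K I .val .nat, R .val .nat n m → n = m
  arrowCond : ∀ {σ τ : Ty} (V W : Tm K I .val (.arrow σ τ)),
    R .val (.arrow σ τ) V W → ∀ U : Val K I σ, R .cpt τ (V U) (W U)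
  prodCond : ∀ {σ τ : Ty} (V W : Tm K I .val (.prod σ τ)),
    R .val (.prod σ τ) V W → R .val σ V.1 W.1 × R .val τ V.2 W.2
  thunkCond : ∀ {σ : Ty} (V W : Tm K I .val (.u σ)),
    R .val (.u σ) V W → R .cpt σ V W
  cptCond : ∀ {τ : Ty} (M N : Tm K I .cpt τ),
    R .cpt τ M N → Gamma πl πn (R .val τ) M N

/-- Applicative `Γ`-similarity. -/
def AppSimilar {b : Srt} {τ : Ty} (P Q : Tm K I b τ) : Type 1 :=
  Σ R : WtRel K I, IsSimulation πl πn R × R b τ P Q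

/-- Applicative `Γ`-bisimilarity. -/
def Bisimilar {b : Srt} {τ : Ty} (P Q : Tm K I b τ) : Type 1 :=
  Σ R : WtRel K I,
    IsSimulation πl πn R × (∀ b τ P Q, R b τ P Q → R b τ Q P) × R b τ P Q

end Sim

/-- Reflexive-transitive closure of a `Type`-valued relation. -/
inductive RTC {A : Type u} (R : A → A → Type u) : A → A → Type u
  | refl (a : A) : RTC R a a
  | tail {a b c : A} (h : RTC R a b) (h' : R b c) : RTC R a c

/-- Binary arity for the nondeterministic choice operation. -/
inductive LR : Type
  | left
  | right

/-- Observations for nondeterminism. -/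
inductive MM : Type
  | may
  | must

def ndπl : MM → Bool := fun _ => true

def ndπn : (k : Unit) → MM → Test (LR × MM)
  | _, .may => .or (.atom (.left, .may)) (.atom (.right, .may))
  | _, .must => .and (.atom (.left, .must)) (.atom (.right, .must))

/-- The candidate decomposition `π_d o = atom (o, o)` for nondeterminism. -/
def ndπd : MM → Test (MM × MM) := fun o => .atom (o, o)


/-!
The inhabitedness of both liftings is a fixed point of one operator `liftTreeStep`: `α` the
least and `β` the greatest, for suitable leaf predicates. Since `μ` only grafts trees onto leaves,
`α o (μ d)` holds iff `d` satisfies the lifting whose leaf predicate at observation `o'` is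
`α o'`, and dually for `β`. For nondeterminism leaves are always accepted and the node test at
`o` only mentions `o`, so the observation never changes along a tree: the leaf predicate may be
taken to be `α o`, which gives `liftTree o (α o) d`, the test `atom (o, o)`. Strong
decomposability then follows by monotonicity of `liftTest`.
-/

namespace Test

variable {X : Type u} {Y : Type v}

def Holds (Q : X → Prop) : Test X → Prop
  | .atom x => Q x
  | .tru => True
  | .fls => False
  | .and t₁ t₂ => t₁.Holds Q ∧ t₂.Holds Q
  | .or t₁ t₂ => t₁.Holds Q ∨ t₂.Holds Q
  | .all ts => ∀ n, (ts n).Holds Q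
  | .ex ts => ∃ n, (ts n).Holds Q

theorem Holds.mono {Q Q' : X → Prop} (hQ : ∀ x, Q x → Q' x) :
    ∀ {t : Test X}, t.Holds Q → t.Holds Q'
  | .atom x, h => hQ x h
  | .tru, h => h
  | .fls, h => h
  | .and _ _, ⟨h₁, h₂⟩ => ⟨Holds.mono hQ h₁, Holds.mono hQ h₂⟩
  | .or _ _, h => h.imp (Holds.mono hQ) (Holds.mono hQ)
  | .all _, h => fun n => Holds.mono hQ (h n)
  | .ex _, ⟨n, h⟩ => ⟨n, Holds.mono hQ h⟩

theorem holds_mapTest {f : X → Y} {Q : Y → Prop} {t : Test X} :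
    (mapTest f t).Holds Q ↔ t.Holds fun x => Q (f x) := by
  induction t <;> simp only [mapTest, Holds, *]

theorem dualTest_mapTest {f : X → Y} {t : Test X} :
    dualTest (mapTest f t) = mapTest f (dualTest t) := by
  induction t <;> simp only [mapTest, dualTest, *]

theorem Holds.exists_sel {X : Type} {Q : X → Prop} :
    ∀ {s : Test X}, s.Holds Q → ∃ c : Sel s, ∀ x, c.At x → Q x
  | .atom x, h => ⟨.atom x, fun _ hx => by cases hx; exact h⟩
  | .tru, _ => ⟨.tru, fun _ hx => nomatch hx⟩
  | .and _ _, ⟨h₁, h₂⟩ => by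
    obtain ⟨c₁, hc₁⟩ := h₁.exists_sel
    obtain ⟨c₂, hc₂⟩ := h₂.exists_sel
    refine ⟨.and c₁ c₂, fun x hx => ?_⟩
    cases hx with
    | andl hx => exact hc₁ x hx
    | andr hx => exact hc₂ x hx
  | .or _ _, .inl h => by
    obtain ⟨c, hc⟩ := h.exists_sel
    exact ⟨.orl c, fun x hx => by cases hx with | orl hx => exact hc x hx⟩
  | .or _ _, .inr h => by
    obtain ⟨c, hc⟩ := h.exists_sel
    exact ⟨.orr c, fun x hx => by cases hx with | orr hx => exact hc x hx⟩
  | .all _, h => by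
    choose cs hcs using fun n => (h n).exists_sel
    exact ⟨.all cs, fun x hx => by cases hx with | all n hx => exact hcs n x hx⟩
  | .ex _, ⟨n, h⟩ => by
    obtain ⟨c, hc⟩ := h.exists_sel
    exact ⟨.ex n c, fun x hx => by cases hx with | ex hx => exact hc x hx⟩

end Test

theorem Sel.holds_of_forall_at {X : Type} {Q : X → Prop} :
    ∀ {s : Test X} (c : Sel s), (∀ x, c.At x → Q x) → s.Holds Q
  | _, .atom x, h => h x (.atom x)
  | _, .tru, _ => trivial
  | _, .and c₁ c₂, h =>
    ⟨holds_of_forall_at c₁ fun x hx => h x (.andl hx),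
      holds_of_forall_at c₂ fun x hx => h x (.andr hx)⟩
  | _, .orl c, h => .inl (holds_of_forall_at c fun x hx => h x (.orl hx))
  | _, .orr c, h => .inr (holds_of_forall_at c fun x hx => h x (.orr hx))
  | _, .all cs, h => fun n => holds_of_forall_at (cs n) fun x hx => h x (.all n hx)
  | _, .ex n c, h => ⟨n, holds_of_forall_at c fun x hx => h x (.ex hx)⟩

def liftTest.map {A : Type u} {P P' : A → Type w} (f : ∀ a, P a → P' a) :
    ∀ {t : Test A}, liftTest P t → liftTest P' t
  | .atom a, h => f a h
  | .tru, h => h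
  | .fls, h => h
  | .and _ _, (h₁, h₂) => (map f h₁, map f h₂)
  | .or _ _, .inl h => .inl (map f h)
  | .or _ _, .inr h => .inr (map f h)
  | .all _, h => fun n => map f (h n)
  | .ex _, ⟨n, h⟩ => ⟨n, map f h⟩

namespace CTree

variable {K : Type} {I : K → Type} {A : Type v}

theorem leaf_or_node (t : CTree K I A) : (∃ a, t = leaf a) ∨ ∃ k ts, t = node k ts := by
  rw [← PFunctor.M.mk_dest t]
  rcases PFunctor.M.dest t with ⟨a | k, ts⟩
  · exact .inl ⟨a, congrArg _ (Sigma.ext rfl (heq_of_eq (funext (·.elim))))⟩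
  · exact .inr ⟨k.down, fun i => ts ⟨i⟩, rfl⟩

theorem leaf_ne_node (a : A) (k : K) (ts : I k → CTree K I A) : leaf a ≠ node k ts :=
  fun h => by cases congrArg (·.1) (PFunctor.M.mk_inj h)

theorem node_inj {k k' : K} {ts : I k → CTree K I A} {ts' : I k' → CTree K I A}
    (h : node k ts = node k' ts') : k = k' ∧ HEq ts ts' := by
  obtain ⟨hk, h'⟩ := Sigma.mk.inj_iff.mp (PFunctor.M.mk_inj h)
  obtain rfl : k = k' := congrArg ULift.down (Sum.inr.inj hk)
  exact ⟨rfl, heq_of_eq (funext fun i => congrFun (eq_of_heq h') ⟨i⟩)⟩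

/-- The corecursion step inside `CTree.mu`, named so that `mu d = M.corec muStep (inl d)`
holds by definition. -/
def muStep (s : CTree K I (CTree K I A) ⊕ CTree K I A) :
    CTreeP K I A (CTree K I (CTree K I A) ⊕ CTree K I A) :=
  match s with
  | Sum.inl d' =>
      match PFunctor.M.dest d' with
      | ⟨Sum.inl t, _⟩ =>
          (match PFunctor.M.dest t with
          | ⟨Sum.inl a, _⟩ => ⟨Sum.inl a, fun e => e.elim⟩
          | ⟨Sum.inr k, ts⟩ => ⟨Sum.inr k, fun i => Sum.inr (ts i)⟩)
      | ⟨Sum.inr k, ds⟩ => ⟨Sum.inr k, fun i => Sum.inl (ds i)⟩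
  | Sum.inr t =>
      match PFunctor.M.dest t with
      | ⟨Sum.inl a, _⟩ => ⟨Sum.inl a, fun e => e.elim⟩
      | ⟨Sum.inr k, ts⟩ => ⟨Sum.inr k, fun i => Sum.inr (ts i)⟩

theorem corec_muStep_inr (t : CTree K I A) : PFunctor.M.corec muStep (Sum.inr t) = t := by
  refine PFunctor.M.bisim' (fun _ => True) (fun t => PFunctor.M.corec muStep (Sum.inr t)) id
    (fun t _ => ?_) t trivial
  rw [PFunctor.M.dest_corec]
  simp only [muStep]
  rcases h : PFunctor.M.dest t with ⟨a | k, ts⟩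
  · exact ⟨_, _, ts, rfl, h, (·.elim)⟩
  · exact ⟨_, _, ts, rfl, h, fun i => ⟨ts i, trivial, rfl, rfl⟩⟩

theorem mu_leaf (t : CTree K I A) : mu (leaf t) = t := by
  refine Eq.trans ?_ (corec_muStep_inr t)
  rw [mu, PFunctor.M.corec_def, PFunctor.M.corec_def]
  rfl

theorem mu_node (k : K) (ds : I k → CTree K I (CTree K I A)) :
    mu (node k ds) = node k fun i => mu (ds i) := by
  rw [mu, PFunctor.M.corec_def]
  rfl

end CTree

open OrderHom CTree

section LiftTreeStep

variable {K : Type} {I : K → Type} {O : Type} {A : Type v}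

def liftTreeStep (πn : (k : K) → O → Test (I k × O)) (L : O → A → Prop) :
    (O → CTree K I A → Prop) →o (O → CTree K I A → Prop) where
  toFun R o t := (∃ a, t = leaf a ∧ L o a) ∨
    ∃ k Ps, t = node k Ps ∧ (πn k o).Holds fun p : I k × O => R p.2 (Ps p.1)
  monotone' _ _ hR _ _ :=
    Or.imp_right fun ⟨k, Ps, ht, h⟩ => ⟨k, Ps, ht, h.mono fun p : I k × O => hR p.2 (Ps p.1)⟩

theorem liftTreeStep_apply {πn : (k : K) → O → Test (I k × O)} {L : O → A → Prop}
    {R : O → CTree K I A → Prop} {o : O} {t : CTree K I A} :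
    liftTreeStep πn L R o t ↔ (∃ a, t = leaf a ∧ L o a) ∨
      ∃ k Ps, t = node k Ps ∧ (πn k o).Holds fun p : I k × O => R p.2 (Ps p.1) :=
  Iff.rfl

variable (πl : O → Bool) (πn : (k : K) → O → Test (I k × O)) {P : A → Type w}

theorem nonempty_alphaT_of_holds {k : K} {Ps : I k → CTree K I A} :
    ∀ {s : Test (I k × O)}, s.Holds (fun p => Nonempty (Alpha πl πn P p.2 (Ps p.1))) →
      Nonempty (AlphaT πl πn P s Ps)
  | .atom _, h => h.map .atom
  | .tru, _ => ⟨.tru⟩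
  | .and _ _, ⟨h₁, h₂⟩ =>
    (nonempty_alphaT_of_holds h₁).elim fun p₁ => (nonempty_alphaT_of_holds h₂).map (.and p₁)
  | .or _ _, .inl h => (nonempty_alphaT_of_holds h).map .orl
  | .or _ _, .inr h => (nonempty_alphaT_of_holds h).map .orr
  | .all _, h => ⟨.all fun n => (nonempty_alphaT_of_holds (h n)).some⟩
  | .ex _, ⟨n, h⟩ => (nonempty_alphaT_of_holds h).map (.ex n)

theorem nonempty_alpha_iff {o : O} {t : CTree K I A} :
    Nonempty (Alpha πl πn P o t) ↔
      lfp (liftTreeStep πn fun o a => πl o = true ∧ Nonempty (P a)) o t := by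
  set F := liftTreeStep πn fun o (a : A) => πl o = true ∧ Nonempty (P a)
  constructor
  · rintro ⟨h⟩
    refine Alpha.rec (motive_1 := fun o t _ => lfp F o t)
      (motive_2 := fun {k} s Ps _ => s.Holds fun p : I k × O => lfp F p.2 (Ps p.1))
      ?_ ?_ (fun _ ih => ih) (fun {_ _} => trivial) (fun _ _ ih₁ ih₂ => ⟨ih₁, ih₂⟩)
      (fun _ ih => .inl ih) (fun _ ih => .inr ih) (fun _ ih => ih) (fun n _ ih => ⟨n, ih⟩) h
    · intro o a hl p
      rw [← map_lfp]
      exact Or.inl ⟨a, rfl, hl, ⟨p⟩⟩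
    · intro o k Ps _ ih
      rw [← map_lfp]
      exact Or.inr ⟨k, Ps, rfl, ih⟩
  · refine fun h => lfp_le F (a := fun o t => Nonempty (Alpha πl πn P o t))
      (fun o t ht => ?_) o t h
    rcases liftTreeStep_apply.1 ht with ⟨a, rfl, hl, ⟨p⟩⟩ | ⟨k, Ps, rfl, hPs⟩
    · exact ⟨.leaf hl p⟩
    · exact (nonempty_alphaT_of_holds πl πn hPs).map .node

end LiftTreeStep

section BetaCoinduction

variable {K : Type} {I : K → Type} {O : Type} {A : Type v}
variable {πl : O → Bool} {πn : (k : K) → O → Test (I k × O)} {P : A → Type w}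
variable {R : BetaPf πl πn P → O → CTree K I A → Prop} {pf : BetaPf πl πn P} {o : O}

theorem BetaWFStep.mono {R' : BetaPf πl πn P → O → CTree K I A → Prop}
    (hR : ∀ pf o t, R pf o t → R' pf o t) {t : CTree K I A}
    (h : BetaWFStep πl πn P R pf o t) : BetaWFStep πl πn P R' pf o t := by
  unfold BetaWFStep at h ⊢
  revert h
  rcases PFunctor.M.dest pf with ⟨⟨o', a', q⟩ | ⟨k', o', c⟩, ch⟩ <;>
    rcases PFunctor.M.dest t with ⟨a | k, ts⟩
  all_goals try exact id
  exact And.imp_right fun ⟨hk, hch⟩ => ⟨hk, fun x hx => hR _ _ _ (hch x hx)⟩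

theorem BetaWF.unfold {t : CTree K I A} (h : BetaWF πl πn P pf o t) :
    BetaWFStep πl πn P (BetaWF πl πn P) pf o t :=
  let ⟨R, hR, hr⟩ := h
  (hR _ _ _ hr).mono fun _ _ _ h => ⟨R, hR, h⟩

theorem BetaWFStep.leaf_cases {a : A} (h : BetaWFStep πl πn P R pf o (leaf a)) :
    Nonempty (P a) ∨ πl o = false := by
  unfold BetaWFStep at h
  revert h
  rcases PFunctor.M.dest pf with ⟨⟨o', a', q⟩ | ⟨k', o', c⟩, ch⟩
  · rintro ⟨rfl, rfl⟩
    rcases q with p | hl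
    exacts [.inl ⟨p⟩, .inr hl]
  · exact False.elim

theorem BetaWFStep.holds_of_node {k : K} {Ps : I k → CTree K I A}
    (h : BetaWFStep πl πn P R pf o (node k Ps)) :
    (πn k o).Holds fun p => ∃ pf', R pf' p.2 (Ps p.1) := by
  unfold BetaWFStep at h
  revert h
  rcases PFunctor.M.dest pf with ⟨⟨o', a', q⟩ | ⟨k', o', c⟩, ch⟩
  · exact False.elim
  · rintro ⟨rfl, hk, hch⟩
    cases hk
    exact c.holds_of_forall_at fun x hx => ⟨_, hch x hx⟩

variable (πl πn P)

/-- Seeds of the corecursion building a `Beta` proof tree from the greatest fixed point. -/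
structure BetaSeed where
  obs : O
  tree : CTree K I A
  mem_gfp : gfp (liftTreeStep πn fun o a => Nonempty (P a) ∨ πl o = false) obs tree

variable {πl πn P}

def BetaSeed.Unfolds (s : BetaSeed πl πn P) (x : (BetaPF πl πn P).Obj (BetaSeed πl πn P)) :
    Prop :=
  (∃ a q, s.tree = leaf a ∧ x = ⟨.inl ⟨s.obs, a, q⟩, (·.elim)⟩) ∨
    ∃ k Ps c, ∃ ch : ULift ((x : I k × O) × Sel.At c x) → BetaSeed πl πn P,
      s.tree = node k Ps ∧ x = ⟨.inr ⟨k, s.obs, c⟩, ch⟩ ∧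
        ∀ y, (ch y).obs = y.down.1.2 ∧ (ch y).tree = Ps y.down.1.1

theorem BetaSeed.exists_unfolds (s : BetaSeed πl πn P) : ∃ x, s.Unfolds x := by
  obtain ⟨o, t, hs⟩ := s
  rw [← map_gfp] at hs
  rcases liftTreeStep_apply.1 hs with ⟨a, rfl, hq⟩ | ⟨k, Ps, rfl, hPs⟩
  · obtain ⟨q⟩ : Nonempty (PSum (P a) (πl o = false)) :=
      hq.elim (fun ⟨p⟩ => ⟨.inl p⟩) fun h => ⟨.inr h⟩
    exact ⟨_, .inl ⟨a, q, rfl, rfl⟩⟩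
  · obtain ⟨c, hc⟩ := hPs.exists_sel
    exact ⟨_, .inr ⟨k, Ps, c, fun y => ⟨y.down.1.2, Ps y.down.1.1, hc _ y.down.2⟩,
      rfl, rfl, fun _ => ⟨rfl, rfl⟩⟩⟩

noncomputable def BetaSeed.unfold (s : BetaSeed πl πn P) :
    (BetaPF πl πn P).Obj (BetaSeed πl πn P) :=
  s.exists_unfolds.choose

theorem BetaSeed.betaWF_corec (s : BetaSeed πl πn P) :
    BetaWF πl πn P (PFunctor.M.corec BetaSeed.unfold s) s.obs s.tree := by
  refine ⟨fun pf o t => ∃ s : BetaSeed πl πn P, s.obs = o ∧ s.tree = t ∧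
    pf = PFunctor.M.corec unfold s, ?_, s, rfl, rfl, rfl⟩
  rintro _ _ _ ⟨s, rfl, rfl, rfl⟩
  unfold BetaWFStep
  rw [PFunctor.M.dest_corec]
  rcases s.exists_unfolds.choose_spec with ⟨a, q, ht, hx⟩ | ⟨k, Ps, c, ch, ht, hx, hch⟩
  · rw [unfold, hx, ht]
    exact ⟨rfl, rfl⟩
  · rw [unfold, hx, ht]
    exact ⟨rfl, rfl, fun x hx => ⟨ch ⟨⟨x, hx⟩⟩, (hch _).1, (hch _).2, rfl⟩⟩

variable (πl πn)

theorem nonempty_beta_iff {t : CTree K I A} :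
    Nonempty (Beta πl πn P o t) ↔
      gfp (liftTreeStep πn fun o a => Nonempty (P a) ∨ πl o = false) o t := by
  refine ⟨fun ⟨pf, h⟩ => le_gfp _ (a := fun o t => ∃ pf, BetaWF πl πn P pf o t) ?_ o t ⟨pf, h⟩,
    fun h => ⟨⟨_, BetaSeed.betaWF_corec ⟨o, t, h⟩⟩⟩⟩
  rintro o t ⟨pf, h⟩
  rcases leaf_or_node t with ⟨a, rfl⟩ | ⟨k, Ps, rfl⟩
  · exact .inl ⟨a, rfl, h.unfold.leaf_cases⟩
  · exact .inr ⟨k, Ps, rfl, h.unfold.holds_of_node⟩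

end BetaCoinduction

section Mu

variable {K : Type} {I : K → Type} {O : Type} {A : Type v}
variable {πn : (k : K) → O → Test (I k × O)} {L : O → A → Prop}

/-- `μ` only grafts trees onto the leaves of `d`. -/
theorem lfp_liftTreeStep_mu {o : O} {d : CTree K I (CTree K I A)} :
    lfp (liftTreeStep πn L) o (mu d) ↔ lfp (liftTreeStep πn (lfp (liftTreeStep πn L))) o d := by
  constructor
  · suffices lfp (liftTreeStep πn L) ≤ fun o t => lfp (liftTreeStep πn L) o t ∧
        ∀ d, mu d = t → lfp (liftTreeStep πn (lfp (liftTreeStep πn L))) o d from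
      fun h => (this o _ h).2 d rfl
    refine lfp_le _ fun o t hS => ?_
    have ht : lfp (liftTreeStep πn L) o t := by
      rw [← map_lfp]
      exact (liftTreeStep πn L).mono (fun _ _ h => h.1) o t hS
    refine ⟨ht, fun d hd => ?_⟩
    rw [← map_lfp]
    rcases leaf_or_node d with ⟨t', rfl⟩ | ⟨k, ds, rfl⟩
    · rw [mu_leaf] at hd
      exact .inl ⟨t', rfl, hd ▸ ht⟩
    · rw [mu_node] at hd
      subst hd
      rcases liftTreeStep_apply.1 hS with ⟨a, ha, -⟩ | ⟨k', Ps, hPs, hS⟩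
      · exact absurd ha.symm (leaf_ne_node _ _ _)
      · obtain ⟨rfl, hds⟩ := node_inj hPs
        cases hds
        exact .inr ⟨k, ds, rfl, hS.mono fun p hp => hp.2 _ rfl⟩
  · refine fun h => lfp_le (liftTreeStep πn _) (a := fun o d => lfp (liftTreeStep πn L) o (mu d))
      (fun o d hd => ?_) o d h
    rcases liftTreeStep_apply.1 hd with ⟨t, rfl, ht⟩ | ⟨k, ds, rfl, hds⟩
    · rwa [mu_leaf]
    · rw [mu_node, ← map_lfp]
      exact .inr ⟨k, _, rfl, hds⟩

theorem gfp_liftTreeStep_mu {o : O} {d : CTree K I (CTree K I A)} :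
    gfp (liftTreeStep πn L) o (mu d) ↔ gfp (liftTreeStep πn (gfp (liftTreeStep πn L))) o d := by
  constructor
  · refine fun h => le_gfp _ (a := fun o d => gfp (liftTreeStep πn L) o (mu d))
      (fun o d hd => ?_) o d h
    rcases leaf_or_node d with ⟨t, rfl⟩ | ⟨k, ds, rfl⟩
    · rw [mu_leaf] at hd
      exact .inl ⟨t, rfl, hd⟩
    · rw [mu_node, ← map_gfp] at hd
      rcases liftTreeStep_apply.1 hd with ⟨a, ha, -⟩ | ⟨k', Ps, hPs, hd⟩
      · exact absurd ha.symm (leaf_ne_node _ _ _)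
      · obtain ⟨rfl, hds⟩ := node_inj hPs
        cases hds
        exact .inr ⟨k, ds, rfl, hd⟩
  · refine fun h => le_gfp (liftTreeStep πn L) (a := fun o t => gfp (liftTreeStep πn L) o t ∨
      ∃ d, mu d = t ∧ gfp (liftTreeStep πn (gfp (liftTreeStep πn L))) o d)
      (fun o t ht => ?_) o _ (.inr ⟨d, rfl, h⟩)
    rcases ht with ht | ⟨d, rfl, hd⟩
    · rw [← map_gfp] at ht
      exact (liftTreeStep πn L).mono (fun _ _ => Or.inl) o t ht
    rw [← map_gfp] at hd
    rcases liftTreeStep_apply.1 hd with ⟨t, rfl, ht⟩ | ⟨k, ds, rfl, hds⟩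
    · rw [mu_leaf]
      rw [← map_gfp] at ht
      exact (liftTreeStep πn L).mono (fun _ _ => Or.inl) o t ht
    · rw [mu_node]
      exact .inr ⟨k, _, rfl, hds.mono fun p hp => .inr ⟨ds p.1, rfl, hp⟩⟩

end Mu

section Local

variable {K : Type} {I : K → Type} {O : Type} {A : Type v}

def NodeTestsLocal (πn : (k : K) → O → Test (I k × O)) : Prop :=
  ∀ k o, ∃ τ : Test (I k), πn k o = mapTest (fun x => (x, o)) τ

variable {πn : (k : K) → O → Test (I k × O)}

theorem NodeTestsLocal.dual (hn : NodeTestsLocal πn) :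
    NodeTestsLocal fun k o => dualTest (πn k o) := fun k o =>
  let ⟨τ, hτ⟩ := hn k o
  ⟨dualTest τ, (congrArg dualTest hτ).trans Test.dualTest_mapTest⟩

theorem NodeTestsLocal.holds_iff (hn : NodeTestsLocal πn) {k : K} {o : O}
    {Q : I k × O → Prop} : (πn k o).Holds Q ↔ (πn k o).Holds fun p => Q (p.1, o) := by
  obtain ⟨τ, hτ⟩ := hn k o
  rw [hτ, Test.holds_mapTest, Test.holds_mapTest]

/-- Along a tree with local node tests the observation never changes. -/
theorem NodeTestsLocal.lfp_congr (hn : NodeTestsLocal πn) {L L' : O → A → Prop} {o : O}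
    (hL : ∀ a, L o a ↔ L' o a) {t : CTree K I A} :
    lfp (liftTreeStep πn L) o t ↔ lfp (liftTreeStep πn L') o t := by
  suffices key : ∀ L L' : O → A → Prop, (∀ a, L o a → L' o a) →
      lfp (liftTreeStep πn L) ≤ fun o' t => o' = o → lfp (liftTreeStep πn L') o t from
    ⟨fun h => key L L' (fun a => (hL a).1) o t h rfl,
      fun h => key L' L (fun a => (hL a).2) o t h rfl⟩
  refine fun L L' hL => lfp_le _ fun o' t ht => ?_
  rintro rfl
  rw [← map_lfp]
  rcases liftTreeStep_apply.1 ht with ⟨a, rfl, ha⟩ | ⟨k, Ps, rfl, hPs⟩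
  · exact .inl ⟨a, rfl, hL a ha⟩
  · exact .inr ⟨k, Ps, rfl, hn.holds_iff.2 ((hn.holds_iff.1 hPs).mono fun _ hp => hp rfl)⟩

theorem NodeTestsLocal.gfp_congr (hn : NodeTestsLocal πn) {L L' : O → A → Prop} {o : O}
    (hL : ∀ a, L o a ↔ L' o a) {t : CTree K I A} :
    gfp (liftTreeStep πn L) o t ↔ gfp (liftTreeStep πn L') o t := by
  suffices key : ∀ L L' : O → A → Prop, (∀ a, L o a → L' o a) →
      (fun o' t => o' = o ∧ gfp (liftTreeStep πn L) o t) ≤ gfp (liftTreeStep πn L') from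
    ⟨fun h => key L L' (fun a => (hL a).1) o t ⟨rfl, h⟩,
      fun h => key L' L (fun a => (hL a).2) o t ⟨rfl, h⟩⟩
  refine fun L L' hL => le_gfp _ fun o' t ⟨ho, ht⟩ => ?_
  subst ho
  rw [← map_gfp] at ht
  rcases liftTreeStep_apply.1 ht with ⟨a, rfl, ha⟩ | ⟨k, Ps, rfl, hPs⟩
  · exact .inl ⟨a, rfl, hL a ha⟩
  · exact .inr ⟨k, Ps, rfl, hn.holds_iff.2 ((hn.holds_iff.1 hPs).mono fun _ hp => ⟨rfl, hp⟩)⟩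

end Local

section Decomposition

variable {K : Type} {I : K → Type} {O : Type}
variable {πl : O → Bool} {πn : (k : K) → O → Test (I k × O)}

theorem nonempty_algA_mu_iff (hl : ∀ o, πl o = true) (hn : NodeTestsLocal πn)
    (d : CTree K I (CTree K I Type)) (o : O) :
    Nonempty (algA πl πn o (mu d)) ↔ Nonempty (liftTree πl πn o (algA πl πn o) d) := by
  rw [liftTree, algA, nonempty_alpha_iff, nonempty_alpha_iff, lfp_liftTreeStep_mu]
  exact hn.lfp_congr fun t => by
    rw [hl o, ← nonempty_alpha_iff]
    exact (and_iff_right rfl).symm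

theorem nonempty_algB_mu_iff (hl : ∀ o, πl o = true) (hn : NodeTestsLocal πn)
    (d : CTree K I (CTree K I Type)) (o : O) :
    Nonempty (algB πl πn o (mu d)) ↔ Nonempty (coliftTree πl πn o (algB πl πn o) d) := by
  rw [coliftTree, algB, coliftTree, nonempty_beta_iff, nonempty_beta_iff, gfp_liftTreeStep_mu]
  exact hn.dual.gfp_congr fun t => by
    rw [hl o, Bool.true_eq_false, or_false, ← nonempty_beta_iff]
    exact Iff.rfl

noncomputable def IsAlphaDecomposition.diag (hl : ∀ o, πl o = true) (hn : NodeTestsLocal πn) :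
    IsAlphaDecomposition πl πn fun o => .atom (o, o) := fun d o =>
  ⟨fun h => ((nonempty_algA_mu_iff hl hn d o).1 ⟨h⟩).some,
    fun h => ((nonempty_algA_mu_iff hl hn d o).2 ⟨h⟩).some⟩

noncomputable def IsBetaDecomposition.diag (hl : ∀ o, πl o = true) (hn : NodeTestsLocal πn) :
    IsBetaDecomposition πl πn fun o => .atom (o, o) := fun d o =>
  ⟨fun h => ((nonempty_algB_mu_iff hl hn d o).1 ⟨h⟩).some,
    fun h => ((nonempty_algB_mu_iff hl hn d o).2 ⟨h⟩).some⟩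

def StronglyDecomposable.ofDecompositions (πd : O → Test (O × O))
    (hα : IsAlphaDecomposition πl πn πd)
    (hβ : IsBetaDecomposition πl πn fun o => dualTest (πd o)) :
    StronglyDecomposable πl πn := fun d₀ d₁ hd o =>
  ⟨fun h => (hα d₁ o).2 (liftTest.map (fun p : O × O => (hd p.1 p.2).1) ((hα d₀ o).1 h)),
    fun h => (hβ d₁ o).2 (liftTest.map (fun p : O × O => (hd p.1 p.2).2) ((hβ d₀ o).1 h))⟩

end Decomposition

theorem ndπn_local : NodeTestsLocal ndπn
  | _, .may => ⟨.or (.atom .left) (.atom .right), rfl⟩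
  | _, .must => ⟨.and (.atom .left) (.atom .right), rfl⟩

/-- for nondeterminism, `ndπd` is an `α`-decomposition, its dual
is a `β`-decomposition, and consequently the triple is strongly decomposable. -/
theorem nondet_decomposable :
    Nonempty (IsAlphaDecomposition ndπl ndπn ndπd ×
      IsBetaDecomposition ndπl ndπn (fun o => dualTest (ndπd o)) ×
      StronglyDecomposable ndπl ndπn) := by
  have hl : ∀ o, ndπl o = true := fun _ => rfl
  have hα := IsAlphaDecomposition.diag hl ndπn_local
  have hβ := IsBetaDecomposition.diag hl ndπn_local
  exact ⟨hα, hβ, .ofDecompositions ndπd hα hβ⟩
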